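/- For 0 < λ < 4 with θ = π - arccos((λ-2)/2) and θ ≠ lπ/(k+1) for all l = 1,…,k, the inverse R of the tridiagonal matrix Q_k(λ) exists and its entries are R_{ij} = [cos((k+1-|i-j|)θ) - cos((k+1-i-j)θ)] / [2 sin θ · sin((k+1)θ)] for 1 ≤ i,j ≤ k. -/

import Mathlib

open Real Matrix

/-- `Q_k(λ)`: `k×k` symmetric tridiagonal matrix with diagonal `λ-2` and off-diagonal `1`. -/
def Qmat (k : ℕ) (lam : ℝ) : Matrix (Fin k) (Fin k) ℝ :=
  fun i j => if i = j then lam - 2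
    else if i.val + 1 = j.val ∨ j.val + 1 = i.val then 1 else 0

/-!
With `λ - 2 = -2 cos θ`, the columns of `Q_k(λ)⁻¹` are the solutions of
`u(n-1) - 2 cos θ u(n) + u(n+1) = δ(n, p)` on `1 ≤ n ≤ k` with `u(0) = u(k+1) = 0`.
The sequence `n ↦ cos((k+1-|n-p|)θ)` satisfies the homogeneous recurrence except at `n = p`,
where the defect is `2 sin θ sin((k+1)θ)`; subtracting `n ↦ cos((k+1-n-p)θ)`, which satisfies it
everywhere, enforces both boundary conditions. Dividing by the defect, which is nonzero exactly
when `θ ∉ πℤ/(k+1)`, gives the inverse.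
-/

lemma Qmat_apply {k : ℕ} (lam : ℝ) (i j : Fin k) :
    Qmat k lam i j = (if j.val + 1 = i.val then 1 else 0) + (if j.val = i.val then lam - 2 else 0)
      + (if j.val = i.val + 1 then 1 else 0) := by
  simp only [Qmat, Fin.ext_iff]
  split_ifs <;> first | omega | ring

lemma sum_Qmat_mul_eq_three_term {k : ℕ} (lam : ℝ) (f : ℕ → ℝ) (h0 : f 0 = 0) (hk : f (k + 1) = 0)
    (i : Fin k) :
    ∑ j : Fin k, Qmat k lam i j * f (j + 1) = f i + (lam - 2) * f (i + 1) + f (i + 2) := by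
  simp only [Qmat_apply, add_mul, ite_mul, one_mul, zero_mul, Finset.sum_add_distrib]
  rw [Fin.sum_univ_eq_sum_range (fun n => if n + 1 = i.val then f (n + 1) else 0),
    Fin.sum_univ_eq_sum_range (fun n => if n = i.val then (lam - 2) * f (n + 1) else 0),
    Fin.sum_univ_eq_sum_range (fun n => if n = i.val + 1 then f (n + 1) else 0),
    Finset.sum_ite_eq', Finset.sum_ite_eq', if_pos (Finset.mem_range.2 i.isLt)]
  have hprev : ∑ n ∈ Finset.range k, (if n + 1 = i.val then f (n + 1) else 0) = f i := by
    have := Finset.sum_range_succ' (fun n => if n = i.val then f n else 0) k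
    rw [Finset.sum_ite_eq', if_pos (by simp [i.isLt.trans k.lt_succ_self])] at this
    rw [this, h0, ite_self, add_zero]
  have hnext : (if i.val + 1 ∈ Finset.range k then f (i + 1 + 1) else 0) = f (i + 2) := by
    split_ifs with h
    · rfl
    · rw [show i.val + 2 = k + 1 by simp at h; omega, hk]
  rw [hprev, hnext]

lemma cos_sub_add_cos_add (a θ : ℝ) : cos (a - θ) + cos (a + θ) = 2 * cos θ * cos a := by
  rw [cos_sub, cos_add]; ring

lemma cos_sub_abs_add_cos_sub_abs (c θ : ℝ) (d : ℤ) :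
    cos ((c - |(d : ℝ) - 1|) * θ) + cos ((c - |(d : ℝ) + 1|) * θ) =
      2 * cos θ * cos ((c - |(d : ℝ)|) * θ) + if d = 0 then 2 * sin θ * sin (c * θ) else 0 := by
  rcases lt_trichotomy d 0 with hd | rfl | hd
  · have hd' : (d : ℝ) ≤ -1 := by exact_mod_cast Int.le_sub_one_of_lt hd
    rw [abs_of_neg (by linarith), abs_of_nonpos (by linarith), abs_of_neg (by linarith),
      if_neg hd.ne, add_zero, ← cos_sub_add_cos_add]
    ring_nf
  · norm_num
    rw [← cos_sub_add_cos_add, sub_mul, one_mul, cos_sub, cos_add]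
    ring
  · have hd' : (1 : ℝ) ≤ d := by exact_mod_cast hd
    rw [abs_of_nonneg (by linarith), abs_of_pos (by linarith), abs_of_pos (by linarith),
      if_neg hd.ne', add_zero, ← cos_sub_add_cos_add]
    ring_nf

noncomputable def tridiagGreen (k : ℕ) (θ x y : ℝ) : ℝ :=
  (cos ((k + 1 - |x - y|) * θ) - cos ((k + 1 - x - y) * θ)) / (2 * sin θ * sin ((k + 1) * θ))

lemma tridiagGreen_zero_left (k : ℕ) (θ : ℝ) (p : ℕ) : tridiagGreen k θ 0 p = 0 := by
  simp [tridiagGreen]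

lemma tridiagGreen_succ_left {k p : ℕ} (θ : ℝ) (hp : p ≤ k + 1) :
    tridiagGreen k θ (k + 1) p = 0 := by
  have : (p : ℝ) ≤ k + 1 := by exact_mod_cast hp
  rw [tridiagGreen, abs_of_nonneg (by linarith), ← cos_neg ((k + 1 - (k + 1) - p) * θ)]
  ring_nf

lemma tridiagGreen_recurrence (k n p : ℕ) {θ : ℝ} (hθ : sin θ ≠ 0)
    (hkθ : sin ((k + 1) * θ) ≠ 0) :
    tridiagGreen k θ n p + tridiagGreen k θ (n + 2) p =
      2 * cos θ * tridiagGreen k θ (n + 1) p + if n + 1 = p then 1 else 0 := by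
  have hkink := cos_sub_abs_add_cos_sub_abs (k + 1) θ ((n + 1 : ℤ) - p)
  have hsmooth := cos_sub_add_cos_add ((k + 1 - (n + 1) - p) * θ) θ
  have hd : (n + 1 : ℤ) - p = 0 ↔ n + 1 = p := by omega
  push_cast at hkink
  rw [if_congr hd rfl rfl, show (n : ℝ) + 1 - p - 1 = n - p by ring,
    show (n : ℝ) + 1 - p + 1 = n + 2 - p by ring] at hkink
  rw [show ((k : ℝ) + 1 - (n + 1) - p) * θ - θ = (k + 1 - (n + 2) - p) * θ by ring,
    show ((k : ℝ) + 1 - (n + 1) - p) * θ + θ = (k + 1 - n - p) * θ by ring] at hsmooth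
  have hD : 2 * sin θ * sin ((k + 1) * θ) ≠ 0 := mul_ne_zero (mul_ne_zero two_ne_zero hθ) hkθ
  unfold tridiagGreen
  split_ifs at hkink ⊢
  · rw [← add_div, mul_div_assoc', div_add_one hD, div_left_inj' hD]
    linear_combination hkink - hsmooth
  · rw [add_zero, ← add_div, mul_div_assoc', div_left_inj' hD]
    linear_combination hkink - hsmooth

theorem Qmat_mul_tridiagGreen {k : ℕ} {lam θ : ℝ} (hlam : lam - 2 = -(2 * cos θ))
    (hθ : sin θ ≠ 0) (hkθ : sin ((k + 1) * θ) ≠ 0) :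
    Qmat k lam * Matrix.of (fun i j : Fin k => tridiagGreen k θ (i.val + 1) (j.val + 1)) = 1 := by
  ext i m
  have hcol := sum_Qmat_mul_eq_three_term lam (fun n => tridiagGreen k θ n (m.val + 1 : ℕ))
    (by exact_mod_cast tridiagGreen_zero_left k θ _)
    (by exact_mod_cast tridiagGreen_succ_left θ (by omega : m.val + 1 ≤ k + 1)) i
  have hrec := tridiagGreen_recurrence k i (m + 1) hθ hkθ
  simp only [Nat.cast_add, Nat.cast_one, Nat.cast_ofNat, Nat.add_right_cancel_iff] at hcol hrec
  rw [mul_apply, one_apply]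
  simp only [of_apply, hcol, Fin.ext_iff, hlam]
  linarith

lemma sin_succ_mul_ne_zero {k : ℕ} {θ : ℝ} (h0 : 0 < θ) (hπ : θ < π)
    (hres : ∀ l : ℕ, 1 ≤ l → l ≤ k → θ ≠ l * π / (k + 1)) : sin ((k + 1) * θ) ≠ 0 := by
  intro h
  obtain ⟨n, hn⟩ := sin_eq_zero_iff.1 h
  have hn0 : 0 < n := by
    have : (0 : ℝ) < n := by nlinarith [pi_pos]
    exact_mod_cast this
  have hnk : n ≤ k := by
    have : (n : ℝ) < k + 1 := by nlinarith [pi_pos]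
    have : n < k + 1 := by exact_mod_cast this
    omega
  lift n to ℕ using hn0.le
  refine hres n (by omega) (by omega) ?_
  rw [eq_div_iff (by positivity)]
  push_cast at hn
  linarith

lemma pi_sub_arccos_mem_Ioo {x : ℝ} (h1 : -1 < x) (h2 : x < 1) : π - arccos x ∈ Set.Ioo 0 π :=
  ⟨sub_pos.2 (arccos_lt_pi.2 h1), sub_lt_self π (arccos_pos.2 h2)⟩

theorem stmt6_general (k : ℕ) (lam : ℝ) (h0 : 0 < lam) (h4 : lam < 4)
    (θ : ℝ) (hθ : θ = Real.pi - Real.arccos ((lam - 2) / 2))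
    (hres : ∀ l : ℕ, 1 ≤ l → l ≤ k → θ ≠ l * Real.pi / (k + 1)) :
    IsUnit (Qmat k lam).det ∧
    ∀ i j : Fin k,
      (Qmat k lam)⁻¹ i j =
        (Real.cos (((k : ℝ) + 1 - |((i.val : ℝ) + 1) - ((j.val : ℝ) + 1)|) * θ) -
          Real.cos (((k : ℝ) + 1 - ((i.val : ℝ) + 1) - ((j.val : ℝ) + 1)) * θ)) /
        (2 * Real.sin θ * Real.sin ((k + 1) * θ)) := by
  obtain ⟨hθ0, hθπ⟩ : θ ∈ Set.Ioo 0 π := hθ ▸ pi_sub_arccos_mem_Ioo (by linarith) (by linarith)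
  have hlam : lam - 2 = -(2 * cos θ) := by
    rw [hθ, cos_pi_sub, cos_arccos (by linarith) (by linarith)]
    ring
  have hQR := Qmat_mul_tridiagGreen hlam (sin_pos_of_pos_of_lt_pi hθ0 hθπ).ne'
    (sin_succ_mul_ne_zero hθ0 hθπ hres)
  exact ⟨isUnit_det_of_right_inverse hQR, fun i j => by rw [inv_eq_right_inv hQR]; rfl⟩

theorem stmt6 (k : ℕ) (hk : 3 ≤ k) (lam : ℝ) (h0 : 0 < lam) (h4 : lam < 4)
    (θ : ℝ) (hθ : θ = Real.pi - Real.arccos ((lam - 2) / 2))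
    (hres : ∀ l : ℕ, 1 ≤ l → l ≤ k → θ ≠ l * Real.pi / (k + 1)) :
    IsUnit (Qmat k lam).det ∧
    ∀ i j : Fin k,
      (Qmat k lam)⁻¹ i j =
        (Real.cos (((k : ℝ) + 1 - |((i.val : ℝ) + 1) - ((j.val : ℝ) + 1)|) * θ) -
          Real.cos (((k : ℝ) + 1 - ((i.val : ℝ) + 1) - ((j.val : ℝ) + 1)) * θ)) /
        (2 * Real.sin θ * Real.sin ((k + 1) * θ)) :=
  stmt6_general k lam h0 h4 θ hθ hres
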